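/- arXiv:1301.6194 — 2 statements merged into one kernel-verified Lean document; each statement's English description precedes it below -/
import Mathlib

section
/- Let z ∈ ℝ^{2n} be any configuration of n point vortices with distinct positions. A vector v is an eigenvector of M⁻¹D²H(z) with eigenvalue μ if and only if Kv is an eigenvector of M⁻¹D²H(z) with eigenvalue −μ. The same equivalence holds for the matrix D²H(z) in place of M⁻¹D²H(z). -/
noncomputable section

open Finset Polynomial

abbrev Idx (n : ℕ) := Fin n × Fin 2

/-- The Hamiltonian of the planar `n`-vortex problem. -/
def vortexH (n : ℕ) (Γ : Fin n → ℝ) (z : Idx n → ℝ) : ℝ :=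
  -∑ i : Fin n, ∑ j ∈ Finset.Ioi i, Γ i * Γ j *
    Real.log (Real.sqrt ((z (i, 0) - z (j, 0)) ^ 2 + (z (i, 1) - z (j, 1)) ^ 2))

/-- The total vortex angular momentum `L = ∑_{i<j} Γᵢ Γⱼ`. -/
def vortexL (n : ℕ) (Γ : Fin n → ℝ) : ℝ :=
  ∑ i : Fin n, ∑ j ∈ Finset.Ioi i, Γ i * Γ j

/-- The gradient of the Hamiltonian (vector of partial derivatives). -/
def gradH (n : ℕ) (Γ : Fin n → ℝ) (z : Idx n → ℝ) : Idx n → ℝ := fun a =>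
  fderiv ℝ (vortexH n Γ) z (Pi.single a 1)

/-- The Hessian matrix `D²H(z)` of second partial derivatives. -/
def D2H (n : ℕ) (Γ : Fin n → ℝ) (z : Idx n → ℝ) : Matrix (Idx n) (Idx n) ℝ :=
  Matrix.of fun a b =>
    fderiv ℝ (fun w => fderiv ℝ (vortexH n Γ) w (Pi.single b 1)) z (Pi.single a 1)

/-- The block-diagonal rotation matrix `K` with `n` copies of `J = [[0,1],[-1,0]]`. -/
def Kmat (n : ℕ) : Matrix (Idx n) (Idx n) ℝ :=
  Matrix.of fun a b => if a.1 = b.1 then !![0, 1; -1, 0] a.2 b.2 else 0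

/-- The diagonal matrix `M = diag(Γ₁,Γ₁,…,Γₙ,Γₙ)` of circulations. -/
def Mmat (n : ℕ) (Γ : Fin n → ℝ) : Matrix (Idx n) (Idx n) ℝ :=
  Matrix.diagonal fun a => Γ a.1

/-- The vortex positions are pairwise distinct. -/
def Distinct (n : ℕ) (z : Idx n → ℝ) : Prop :=
  ∀ i j : Fin n, i ≠ j → (z (i, 0), z (i, 1)) ≠ (z (j, 0), z (j, 1))

/-- The angular impulse `I(z) = (1/2) ∑ᵢ Γᵢ ‖zᵢ‖²`. -/
def angImpulse (n : ℕ) (Γ : Fin n → ℝ) (z : Idx n → ℝ) : ℝ :=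
  (1 / 2) * ∑ i : Fin n, Γ i * ((z (i, 0)) ^ 2 + (z (i, 1)) ^ 2)

/-- `z₀` is a relative equilibrium with angular velocity `ω ≠ 0`:
`∇H(z₀) + ω M z₀ = 0`. -/
def IsRelEq (n : ℕ) (Γ : Fin n → ℝ) (z₀ : Idx n → ℝ) (ω : ℝ) : Prop :=
  Distinct n z₀ ∧ ω ≠ 0 ∧ gradH n Γ z₀ + ω • (Mmat n Γ).mulVec z₀ = 0

/-- The stability matrix `B = K (M⁻¹ D²H(z₀) + ω Id)`. -/
def Bmat (n : ℕ) (Γ : Fin n → ℝ) (z₀ : Idx n → ℝ) (ω : ℝ) : Matrix (Idx n) (Idx n) ℝ :=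
  Kmat n * ((Mmat n Γ)⁻¹ * D2H n Γ z₀ + ω • (1 : Matrix (Idx n) (Idx n) ℝ))

/-- The multiset of (complex) eigenvalues of the stability matrix `B`, with multiplicity. -/
def specB (n : ℕ) (Γ : Fin n → ℝ) (z₀ : Idx n → ℝ) (ω : ℝ) : Multiset ℂ :=
  (((Bmat n Γ z₀ ω).map Complex.ofReal).charpoly).roots

/-- The trivial eigenvalues `0, 0, ωi, -ωi` of the stability matrix. -/
def trivialEvs (ω : ℝ) : Multiset ℂ := {0, 0, (ω : ℂ) * Complex.I, -((ω : ℂ) * Complex.I)}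

/-- `V = span{z₀, Kz₀}`. -/
def Vspan (n : ℕ) (z₀ : Idx n → ℝ) : Submodule ℝ (Idx n → ℝ) :=
  Submodule.span ℝ {z₀, (Kmat n).mulVec z₀}

/-- The `M`-orthogonal complement `V^⊥` of `V = span{z₀, Kz₀}` (over ℝ). -/
def VperpR (n : ℕ) (Γ : Fin n → ℝ) (z₀ : Idx n → ℝ) : Submodule ℝ (Idx n → ℝ) :=
  LinearMap.ker (Matrix.mulVecLin (Matrix.of
    ![(Mmat n Γ).mulVec z₀, (Mmat n Γ).mulVec ((Kmat n).mulVec z₀)]))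

/-- The complexification of `V^⊥`. -/
def VperpC (n : ℕ) (Γ : Fin n → ℝ) (z₀ : Idx n → ℝ) : Submodule ℂ (Idx n → ℂ) :=
  LinearMap.ker (Matrix.mulVecLin (Matrix.of
    ![fun a => ((Mmat n Γ).mulVec z₀ a : ℂ),
      fun a => ((Mmat n Γ).mulVec ((Kmat n).mulVec z₀) a : ℂ)]))

/-- The complexified stability matrix as a linear map on `ℂ^{2n}`. -/
def BC (n : ℕ) (Γ : Fin n → ℝ) (z₀ : Idx n → ℝ) (ω : ℝ) : (Idx n → ℂ) →ₗ[ℂ] (Idx n → ℂ) :=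
  Matrix.mulVecLin ((Bmat n Γ z₀ ω).map Complex.ofReal)

/-- `z₀` is linearly stable: the `2n - 4` nontrivial eigenvalues of `B` are nonzero and purely
imaginary, and the restriction of `B` to `V^⊥` is diagonalizable over `ℂ`. -/
def IsLinearlyStable (n : ℕ) (Γ : Fin n → ℝ) (z₀ : Idx n → ℝ) (ω : ℝ) : Prop :=
  (∃ ν : Multiset ℂ, specB n Γ z₀ ω = trivialEvs ω + ν ∧ ∀ μ ∈ ν, μ ≠ 0 ∧ μ.re = 0) ∧
  ∃ h : ∀ w ∈ VperpC n Γ z₀, BC n Γ z₀ ω w ∈ VperpC n Γ z₀,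
    (⨆ μ : ℂ, Module.End.eigenspace ((BC n Γ z₀ ω).restrict h) μ) = ⊤

/-- `z₀` is spectrally stable: nontrivial eigenvalues are nonzero and purely imaginary. -/
def IsSpectrallyStable (n : ℕ) (Γ : Fin n → ℝ) (z₀ : Idx n → ℝ) (ω : ℝ) : Prop :=
  ∃ ν : Multiset ℂ, specB n Γ z₀ ω = trivialEvs ω + ν ∧ ∀ μ ∈ ν, μ ≠ 0 ∧ μ.re = 0

/-- `z₀` is degenerate: some nontrivial eigenvalue of `B` is zero. -/
def IsDegenerate (n : ℕ) (Γ : Fin n → ℝ) (z₀ : Idx n → ℝ) (ω : ℝ) : Prop :=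
  ∃ ν : Multiset ℂ, specB n Γ z₀ ω = trivialEvs ω + ν ∧ 0 ∈ ν

/-- `z₀` is unstable: some nontrivial eigenvalue of `B` has nonzero real part. -/
def IsUnstable (n : ℕ) (Γ : Fin n → ℝ) (z₀ : Idx n → ℝ) (ω : ℝ) : Prop :=
  ∃ ν : Multiset ℂ, specB n Γ z₀ ω = trivialEvs ω + ν ∧ ∃ μ ∈ ν, μ.re ≠ 0

/-- Rotation `e^{Jθ}` applied to each vortex of the configuration `z`. -/
def rotConf (n : ℕ) (θ : ℝ) (z : Idx n → ℝ) : Idx n → ℝ := fun a =>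
  if a.2 = 0 then Real.cos θ * z (a.1, 0) + Real.sin θ * z (a.1, 1)
  else -Real.sin θ * z (a.1, 0) + Real.cos θ * z (a.1, 1)

/-- The Euclidean norm on `ℝ^{2n}`. -/
def enorm2 (n : ℕ) (v : Idx n → ℝ) : ℝ := Real.sqrt (∑ a : Idx n, (v a) ^ 2)


/-! Since `K² = -1`, both equivalences say that `K` anticommutes with `D²H(z)` and with
`M⁻¹D²H(z)`. A `2 × 2` matrix anticommutes with `J` iff it is symmetric and trace-free. Every
`2 × 2` block of `D²H(z)` is a signed sum of Hessians of `log ‖zᵢ - zⱼ‖`, which are symmetric and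
trace-free because `log ‖x‖` is harmonic on `ℝ² \ {0}`. Finally `M` is scalar on each block, so
`M` and `M⁻¹` commute with `K`. -/

theorem Commute.mul_eq_neg_mul_of_anticomm {α : Type*} [Ring α] {k a s : α} (hka : Commute k a)
    (hks : k * s = -(s * k)) : k * (a * s) = -(a * s * k) := by
  rw [← mul_assoc, hka.eq, mul_assoc, hks, mul_neg, mul_assoc]

section Anticommute

open Matrix

variable {m R : Type*} [Fintype m] [CommRing R]

theorem Commute.nonsing_inv_right_of_isUnit [DecidableEq m] {A B : Matrix m m R}
    (h : Commute A B) (hA : IsUnit A) : Commute A B⁻¹ := by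
  have hinv : Commute (Ring.inverse A) (Ring.inverse B) := h.ringInverse_ringInverse
  rw [← nonsing_inv_eq_ringInverse, ← nonsing_inv_eq_ringInverse] at hinv
  lift A to (Matrix m m R)ˣ using hA
  rw [← coe_units_inv] at hinv
  exact Commute.units_inv_left_iff.mp hinv

theorem Matrix.mulVec_mulVec_eq_neg_smul {K S : Matrix m m R} (hKS : K * S = -(S * K))
    {v : m → R} {μ : R} (h : S *ᵥ v = μ • v) : S *ᵥ (K *ᵥ v) = (-μ) • (K *ᵥ v) := by
  rw [mulVec_mulVec, show S * K = -(K * S) by rw [hKS, neg_neg], neg_mulVec,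
    ← mulVec_mulVec, h, mulVec_smul, neg_smul]

theorem Matrix.mulVec_eq_smul_iff_of_anticomm [DecidableEq m] {K S : Matrix m m R}
    (hKK : K * K = -1) (hKS : K * S = -(S * K)) (v : m → R) (μ : R) :
    S *ᵥ v = μ • v ↔ S *ᵥ (K *ᵥ v) = (-μ) • (K *ᵥ v) := by
  refine ⟨mulVec_mulVec_eq_neg_smul hKS, fun h => ?_⟩
  have hKKv : K *ᵥ (K *ᵥ v) = -v := by rw [mulVec_mulVec, hKK, neg_mulVec, one_mulVec]
  simpa [hKKv, neg_neg, mulVec_neg] using mulVec_mulVec_eq_neg_smul hKS h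

end Anticommute

section Rotation

open Matrix

theorem Kmat_mul_apply {n : ℕ} (S : Matrix (Idx n) (Idx n) ℝ) (l : Fin n) (d : Fin 2) (b : Idx n) :
    (Kmat n * S) (l, d) b = if d = 0 then S (l, 1) b else -S (l, 0) b := by
  rw [mul_apply, Fintype.sum_prod_type]
  fin_cases d <;> simp [Kmat, Fin.sum_univ_two]

theorem mul_Kmat_apply {n : ℕ} (S : Matrix (Idx n) (Idx n) ℝ) (a : Idx n) (k : Fin n) (c : Fin 2) :
    (S * Kmat n) a (k, c) = if c = 0 then -S a (k, 1) else S a (k, 0) := by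
  rw [mul_apply, Fintype.sum_prod_type]
  fin_cases c <;> simp [Kmat, Fin.sum_univ_two, eq_comm]

theorem Kmat_mul_Kmat (n : ℕ) : Kmat n * Kmat n = -1 := by
  ext ⟨l, d⟩ ⟨k, c⟩
  rw [Kmat_mul_apply]
  by_cases hlk : l = k <;> fin_cases d <;> fin_cases c <;> simp [Kmat, one_apply, hlk]

theorem isUnit_Kmat (n : ℕ) : IsUnit (Kmat n) :=
  IsUnit.of_mul_eq_one (-Kmat n) (by rw [mul_neg, Kmat_mul_Kmat, neg_neg])

theorem Kmat_mulVec_ne_zero {n : ℕ} {v : Idx n → ℝ} (hv : v ≠ 0) : Kmat n *ᵥ v ≠ 0 :=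
  fun h => hv (by simpa [mulVec_mulVec, Kmat_mul_Kmat, neg_mulVec] using congrArg (Kmat n *ᵥ ·) h)

theorem commute_Kmat_Mmat (n : ℕ) (Γ : Fin n → ℝ) : Commute (Kmat n) (Mmat n Γ) := by
  ext ⟨l, d⟩ ⟨k, c⟩
  rw [Kmat_mul_apply, mul_Kmat_apply]
  fin_cases d <;> fin_cases c <;> simp [Mmat, diagonal_apply]

theorem Kmat_mul_eq_neg_mul_Kmat {n : ℕ} {S : Matrix (Idx n) (Idx n) ℝ}
    (hsymm : ∀ l k, S (l, 1) (k, 0) = S (l, 0) (k, 1))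
    (htrace : ∀ l k, S (l, 0) (k, 0) + S (l, 1) (k, 1) = 0) :
    Kmat n * S = -(S * Kmat n) := by
  ext ⟨l, d⟩ ⟨k, c⟩
  rw [neg_apply, Kmat_mul_apply, mul_Kmat_apply]
  fin_cases d <;> fin_cases c <;> simp [hsymm] <;> linarith [htrace l k]

end Rotation

section Hessian

variable {n : ℕ}

def coordDiff (i j : Fin n) (c : Fin 2) : (Idx n → ℝ) →L[ℝ] ℝ :=
  ContinuousLinearMap.proj (R := ℝ) (φ := fun _ : Idx n => ℝ) (i, c) -
    ContinuousLinearMap.proj (R := ℝ) (φ := fun _ : Idx n => ℝ) (j, c)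

theorem coordDiff_apply (i j : Fin n) (c : Fin 2) (w : Idx n → ℝ) :
    coordDiff i j c w = w (i, c) - w (j, c) := rfl

def incidence (i j k : Fin n) : ℝ := (if i = k then 1 else 0) - (if j = k then 1 else 0)

theorem coordDiff_single (i j : Fin n) (c : Fin 2) (k : Fin n) (d : Fin 2) :
    coordDiff i j c (Pi.single (k, d) 1) = if c = d then incidence i j k else 0 := by
  by_cases hcd : c = d <;> by_cases hik : i = k <;> by_cases hjk : j = k <;>
    simp [coordDiff_apply, incidence, hcd, hik, hjk]

def sqDist (i j : Fin n) (w : Idx n → ℝ) : ℝ :=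
  (w (i, 0) - w (j, 0)) ^ 2 + (w (i, 1) - w (j, 1)) ^ 2

def sqDistDeriv (i j : Fin n) (w : Idx n → ℝ) : (Idx n → ℝ) →L[ℝ] ℝ :=
  (2 * coordDiff i j 0 w) • coordDiff i j 0 + (2 * coordDiff i j 1 w) • coordDiff i j 1

theorem hasFDerivAt_sqDist (i j : Fin n) (w : Idx n → ℝ) :
    HasFDerivAt (sqDist i j) (sqDistDeriv i j w) w := by
  have hsq (c : Fin 2) : HasFDerivAt (fun w => coordDiff i j c w ^ 2)
      ((2 * coordDiff i j c w) • coordDiff i j c) w := by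
    simpa [pow_two, two_mul, add_smul] using
      (coordDiff i j c).hasFDerivAt.fun_mul (coordDiff i j c).hasFDerivAt
  exact (hsq 0).fun_add (hsq 1)

theorem sqDistDeriv_single (i j : Fin n) (w : Idx n → ℝ) (k : Fin n) (c : Fin 2) :
    sqDistDeriv i j w (Pi.single (k, c) 1) = 2 * coordDiff i j c w * incidence i j k := by
  fin_cases c <;> simp [sqDistDeriv, coordDiff_single]

theorem sqDist_ne_zero {z : Idx n → ℝ} (hz : Distinct n z) {i j : Fin n} (hij : i ≠ j) :
    sqDist i j z ≠ 0 := by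
  intro h
  obtain ⟨h0, h1⟩ := (add_eq_zero_iff_of_nonneg (sq_nonneg _) (sq_nonneg _)).1 h
  rw [sq_eq_zero_iff, sub_eq_zero] at h0 h1
  exact hz i j hij (by rw [h0, h1])

theorem eventually_sqDist_ne_zero {z : Idx n → ℝ} (hz : Distinct n z) :
    ∀ᶠ w in nhds z, ∀ i j : Fin n, i < j → sqDist i j w ≠ 0 := by
  refine Filter.eventually_all.2 fun i => Filter.eventually_all.2 fun j => ?_
  by_cases hij : i < j
  · exact ((hasFDerivAt_sqDist i j z).continuousAt.eventually_ne
      (sqDist_ne_zero hz hij.ne)).mono fun w hw _ => hw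
  · exact Filter.Eventually.of_forall fun w h => absurd h hij

theorem vortexH_eq_sum_log_sqDist (Γ : Fin n → ℝ) :
    vortexH n Γ = fun w => -∑ i, ∑ j ∈ Ioi i, Γ i * Γ j / 2 * Real.log (sqDist i j w) := by
  funext w
  unfold vortexH sqDist
  congr 1
  refine sum_congr rfl fun i _ => sum_congr rfl fun j _ => ?_
  rw [Real.log_sqrt (by positivity)]
  ring

def vortexPartial (Γ : Fin n → ℝ) (k : Fin n) (c : Fin 2) (w : Idx n → ℝ) : ℝ :=
  -∑ i, ∑ j ∈ Ioi i, Γ i * Γ j * incidence i j k * (coordDiff i j c w * (sqDist i j w)⁻¹)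

theorem fderiv_vortexH_single (Γ : Fin n → ℝ) {w : Idx n → ℝ}
    (hw : ∀ i j : Fin n, i < j → sqDist i j w ≠ 0) (k : Fin n) (c : Fin 2) :
    fderiv ℝ (vortexH n Γ) w (Pi.single (k, c) 1) = vortexPartial Γ k c w := by
  have hH : HasFDerivAt (vortexH n Γ) (-∑ i, ∑ j ∈ Ioi i,
      (Γ i * Γ j / 2) • (sqDist i j w)⁻¹ • sqDistDeriv i j w) w := by
    rw [vortexH_eq_sum_log_sqDist]
    exact .neg <| .fun_sum fun i _ => .fun_sum fun j hj =>
      ((hasFDerivAt_sqDist i j w).log (hw i j (mem_Ioi.1 hj))).const_mul _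
  simp only [hH.fderiv, vortexPartial, neg_apply, _root_.sum_apply, smul_apply,
    sqDistDeriv_single, smul_eq_mul]
  congr 1
  refine sum_congr rfl fun i _ => sum_congr rfl fun j _ => ?_
  ring

theorem fderiv_vortexPartial_single (Γ : Fin n → ℝ) {z : Idx n → ℝ}
    (hz : ∀ i j : Fin n, i < j → sqDist i j z ≠ 0) (k : Fin n) (c : Fin 2) (l : Fin n)
    (d : Fin 2) :
    fderiv ℝ (vortexPartial Γ k c) z (Pi.single (l, d) 1) =
      -∑ i, ∑ j ∈ Ioi i, Γ i * Γ j * incidence i j k * incidence i j l *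
        ((if c = d then (sqDist i j z)⁻¹ else 0) -
          2 * coordDiff i j c z * coordDiff i j d z * (sqDist i j z ^ 2)⁻¹) := by
  have hG : HasFDerivAt (vortexPartial Γ k c) (-∑ i, ∑ j ∈ Ioi i,
      (Γ i * Γ j * incidence i j k) • (coordDiff i j c z • (-(sqDist i j z ^ 2)⁻¹ •
        sqDistDeriv i j z) + (sqDist i j z)⁻¹ • coordDiff i j c)) z :=
    .neg <| .fun_sum fun i _ => .fun_sum fun j hj =>
      ((coordDiff i j c).hasFDerivAt.fun_mul <|
        (hasDerivAt_inv (hz i j (mem_Ioi.1 hj))).comp_hasFDerivAt z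
          (hasFDerivAt_sqDist i j z)).const_mul _
  simp only [hG.fderiv, neg_apply, _root_.sum_apply, smul_apply, add_apply,
    sqDistDeriv_single, coordDiff_single, smul_eq_mul]
  congr 1
  refine sum_congr rfl fun i _ => sum_congr rfl fun j _ => ?_
  split_ifs <;> ring

theorem D2H_apply (Γ : Fin n → ℝ) {z : Idx n → ℝ} (hz : Distinct n z) (l k : Fin n)
    (d c : Fin 2) :
    D2H n Γ z (l, d) (k, c) =
      -∑ i, ∑ j ∈ Ioi i, Γ i * Γ j * incidence i j k * incidence i j l *
        ((if c = d then (sqDist i j z)⁻¹ else 0) -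
          2 * coordDiff i j c z * coordDiff i j d z * (sqDist i j z ^ 2)⁻¹) := by
  have hpartial : (fun w => fderiv ℝ (vortexH n Γ) w (Pi.single (k, c) 1)) =ᶠ[nhds z]
      vortexPartial Γ k c :=
    (eventually_sqDist_ne_zero hz).mono fun w hw => fderiv_vortexH_single Γ hw k c
  rw [D2H, Matrix.of_apply, hpartial.fderiv_eq,
    fderiv_vortexPartial_single Γ (fun i j hij => sqDist_ne_zero hz hij.ne)]

theorem D2H_block_symm (Γ : Fin n → ℝ) {z : Idx n → ℝ} (hz : Distinct n z) (l k : Fin n) :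
    D2H n Γ z (l, 1) (k, 0) = D2H n Γ z (l, 0) (k, 1) := by
  simp only [D2H_apply Γ hz, Fin.reduceEq, if_false, mul_right_comm _ (coordDiff _ _ 0 z)]

theorem D2H_block_trace (Γ : Fin n → ℝ) {z : Idx n → ℝ} (hz : Distinct n z) (l k : Fin n) :
    D2H n Γ z (l, 0) (k, 0) + D2H n Γ z (l, 1) (k, 1) = 0 := by
  rw [D2H_apply Γ hz, D2H_apply Γ hz, ← neg_add, neg_eq_zero, ← sum_add_distrib]
  refine sum_eq_zero fun i _ => ?_
  rw [← sum_add_distrib]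
  refine sum_eq_zero fun j hj => ?_
  have hq := sqDist_ne_zero hz (mem_Ioi.1 hj).ne
  simp only [if_true, coordDiff_apply]
  unfold sqDist at hq ⊢
  field_simp
  ring

end Hessian

theorem eigenvector_iff_K_eigenvector_general (n : ℕ) (Γ : Fin n → ℝ)
    (z : Idx n → ℝ) (hz : Distinct n z)
    (v : Idx n → ℝ) (hv : v ≠ 0) (μ : ℝ) :
    (Kmat n).mulVec v ≠ 0 ∧
    (((Mmat n Γ)⁻¹ * D2H n Γ z).mulVec v = μ • v ↔
      ((Mmat n Γ)⁻¹ * D2H n Γ z).mulVec ((Kmat n).mulVec v)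
        = (-μ) • ((Kmat n).mulVec v)) ∧
    ((D2H n Γ z).mulVec v = μ • v ↔
      (D2H n Γ z).mulVec ((Kmat n).mulVec v) = (-μ) • ((Kmat n).mulVec v)) := by
  have hD : Kmat n * D2H n Γ z = -(D2H n Γ z * Kmat n) :=
    Kmat_mul_eq_neg_mul_Kmat (D2H_block_symm Γ hz) (D2H_block_trace Γ hz)
  have hMinv : Commute (Kmat n) (Mmat n Γ)⁻¹ :=
    (commute_Kmat_Mmat n Γ).nonsing_inv_right_of_isUnit (isUnit_Kmat n)
  have hMD : Kmat n * ((Mmat n Γ)⁻¹ * D2H n Γ z) = -((Mmat n Γ)⁻¹ * D2H n Γ z * Kmat n) :=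
    hMinv.mul_eq_neg_mul_of_anticomm hD
  exact ⟨Kmat_mulVec_ne_zero hv,
    Matrix.mulVec_eq_smul_iff_of_anticomm (Kmat_mul_Kmat n) hMD v μ,
    Matrix.mulVec_eq_smul_iff_of_anticomm (Kmat_mul_Kmat n) hD v μ⟩

/-- `v` is an eigenvector of `M⁻¹D²H(z)` (resp. `D²H(z)`) with eigenvalue `μ`
iff `Kv` is an eigenvector with eigenvalue `-μ`. -/
theorem eigenvector_iff_K_eigenvector (n : ℕ) (hn : 2 ≤ n) (Γ : Fin n → ℝ)
    (hΓ : ∀ i, Γ i ≠ 0) (z : Idx n → ℝ) (hz : Distinct n z)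
    (v : Idx n → ℝ) (hv : v ≠ 0) (μ : ℝ) :
    (Kmat n).mulVec v ≠ 0 ∧
    (((Mmat n Γ)⁻¹ * D2H n Γ z).mulVec v = μ • v ↔
      ((Mmat n Γ)⁻¹ * D2H n Γ z).mulVec ((Kmat n).mulVec v)
        = (-μ) • ((Kmat n).mulVec v)) ∧
    ((D2H n Γ z).mulVec v = μ • v ↔
      (D2H n Γ z).mulVec ((Kmat n).mulVec v) = (-μ) • ((Kmat n).mulVec v)) :=
  eigenvector_iff_K_eigenvector_general n Γ z hz v hv μ
end
end

section
/- Let z₀ be a relative equilibrium with angular velocity ω and stability matrix B, let V = span{z₀, Kz₀}, and let V^⊥ = {w ∈ ℝ^{2n} : wᵀMv = 0 for all v ∈ V} be the M-orthogonal complement of V. Then V^⊥ has dimension 2n − 2 and is invariant under B. Moreover, if L ≠ 0 then V ∩ V^⊥ = {0}. -/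
noncomputable section

open Finset Polynomial

/-!
`H` is invariant under the rotations `z ↦ e^{Jθ} z` and satisfies `H(t z) = H(z) - L log t`.
Differentiating these symmetries gives Euler's identity `⟨∇H(z), z⟩ = -L`; differentiating the
induced symmetries of `DH` gives `D²H(z) z = -∇H(z)` and `D²H(z) K z = K ∇H(z)`. At a relative
equilibrium `∇H = -ω M z₀`, so `Bᵀ` sends `M z₀` to `0` and `M K z₀` to `2ω M z₀`; hence `V^⊥`,
the annihilator of these two covectors, is `B`-invariant. Since `M K z₀ = K M z₀`, they are nonzero
and Euclidean-orthogonal, so `dim V^⊥ = 2n - 2`. Finally the `M`-Gram matrix of `(z₀, K z₀)` is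
`⟨M z₀, z₀⟩ · Id`, and `ω ⟨M z₀, z₀⟩ = L` by Euler's identity.
-/

open Matrix Filter Topology

namespace Matrix

lemma dotProduct_mulVec_self_of_transpose_eq_neg {ι : Type*} [Fintype ι] {A : Matrix ι ι ℝ}
    (hA : Aᵀ = -A) (x : ι → ℝ) : x ⬝ᵥ (A *ᵥ x) = 0 := by
  have h := dotProduct_mulVec x A x
  rw [← mulVec_transpose, hA, neg_mulVec, neg_dotProduct, dotProduct_comm (A *ᵥ x)] at h
  linarith

lemma finrank_ker_mulVecLin {K m k : Type*} [Field K] [Fintype m] [Fintype k]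
    {A : Matrix m k K} (h : LinearIndependent K A.row) :
    Module.finrank K (LinearMap.ker A.mulVecLin) = Fintype.card k - Fintype.card m := by
  have := A.mulVecLin.finrank_range_add_finrank_ker
  rw [← Matrix.rank, h.rank_matrix, Module.finrank_fintype_fun_eq_card] at this
  omega

end Matrix

namespace ContinuousLinearMap

variable {ι : Type*} [Fintype ι] [DecidableEq ι]

lemma apply_eq_dotProduct (φ : (ι → ℝ) →L[ℝ] ℝ) (x : ι → ℝ) :
    φ x = x ⬝ᵥ fun i => φ (Pi.single i 1) := by
  conv_lhs => rw [← Finset.univ_sum_single x]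
  rw [map_sum]
  refine Finset.sum_congr rfl fun i _ => ?_
  have hsingle : Pi.single i (x i) = x i • Pi.single i (1 : ℝ) := by
    rw [← Pi.single_smul', smul_eq_mul, mul_one]
  rw [hsingle, map_smul, smul_eq_mul]

end ContinuousLinearMap

section Invariance

variable {E : Type*} [NormedAddCommGroup E] [NormedSpace ℝ E] {f : E → ℝ}

lemma fderiv_apply_map_of_comp_eventuallyEq {L : E →L[ℝ] E} {x : E} {c : ℝ}
    (hf : DifferentiableAt ℝ f (L x)) (h : f ∘ L =ᶠ[𝓝 x] fun y => f y + c) (v : E) :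
    fderiv ℝ f (L x) (L v) = fderiv ℝ f x v := by
  have hcomp := (hf.hasFDerivAt.comp x L.hasFDerivAt).fderiv
  rw [h.fderiv_eq, fderiv_add_const] at hcomp
  exact (congrArg (· v) hcomp).symm

lemma fderiv_fderiv_apply_generator {A : ℝ → E →L[ℝ] E} {A' : E →L[ℝ] E} {s₀ : ℝ} {x : E}
    (hA : HasDerivAt A A' s₀) (hA₀ : A s₀ = ContinuousLinearMap.id ℝ E)
    (hf : DifferentiableAt ℝ (fderiv ℝ f) x)
    (hinv : ∀ᶠ s in 𝓝 s₀, ∀ v, fderiv ℝ f (A s x) (A s v) = fderiv ℝ f x v) (v : E) :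
    fderiv ℝ (fderiv ℝ f) x (A' x) v = -fderiv ℝ f x (A' v) := by
  have hAapply : ∀ y, HasDerivAt (fun s => A s y) (A' y) s₀ := fun y =>
    (ContinuousLinearMap.apply ℝ E y).hasFDerivAt.comp_hasDerivAt s₀ hA
  have hx : A s₀ x = x := by simp [hA₀]
  have hcurve : HasDerivAt (fun s => fderiv ℝ f (A s x)) (fderiv ℝ (fderiv ℝ f) x (A' x)) s₀ := by
    have hf' : HasFDerivAt (fderiv ℝ f) (fderiv ℝ (fderiv ℝ f) x) (A s₀ x) := by
      rw [hx]; exact hf.hasFDerivAt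
    exact hf'.comp_hasDerivAt s₀ (hAapply x)
  have hconst : HasDerivAt (fun s => fderiv ℝ f (A s x) (A s v)) 0 s₀ :=
    (hasDerivAt_const s₀ (fderiv ℝ f x v)).congr_of_eventuallyEq (hinv.mono fun s hs => hs v)
  have := (hcurve.clm_apply (hAapply v)).unique hconst
  simp only [hA₀, ContinuousLinearMap.id_apply] at this
  linarith

end Invariance

lemma vecMul_hessian {ι : Type*} [Fintype ι] [DecidableEq ι] {f : (ι → ℝ) → ℝ} {z : ι → ℝ}
    (hf : DifferentiableAt ℝ (fderiv ℝ f) z) (x : ι → ℝ) :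
    x ᵥ* Matrix.of (fun a b => fderiv ℝ (fun w => fderiv ℝ f w (Pi.single b 1)) z (Pi.single a 1))
      = fun b => fderiv ℝ (fderiv ℝ f) z x (Pi.single b 1) := by
  funext b
  have h := ((ContinuousLinearMap.apply ℝ ℝ (Pi.single b 1)).comp
    (fderiv ℝ (fderiv ℝ f) z)).apply_eq_dotProduct x
  simp only [ContinuousLinearMap.comp_apply, ContinuousLinearMap.apply_apply] at h
  rw [h]
  refine congrArg (x ⬝ᵥ ·) (funext fun a => ?_)
  simp [fderiv_clm_apply hf (differentiableAt_const _)]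

variable {n : ℕ}

lemma Kmat_transpose : (Kmat n)ᵀ = -Kmat n := by
  ext ⟨i, a⟩ ⟨j, b⟩
  by_cases h : i = j
  · subst h
    fin_cases a <;> fin_cases b <;> simp [Kmat]
  · simp [Kmat, h, Ne.symm h]

lemma Kmat_mulVec_apply_zero (v : Idx n → ℝ) (i : Fin n) : (Kmat n *ᵥ v) (i, 0) = v (i, 1) := by
  simp [Kmat, mulVec, dotProduct, Fintype.sum_prod_type, Fin.sum_univ_two]

lemma Kmat_mulVec_apply_one (v : Idx n → ℝ) (i : Fin n) : (Kmat n *ᵥ v) (i, 1) = -v (i, 0) := by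
  simp [Kmat, mulVec, dotProduct, Fintype.sum_prod_type, Fin.sum_univ_two]

lemma Kmat_mulVec_Kmat_mulVec (x : Idx n → ℝ) : Kmat n *ᵥ (Kmat n *ᵥ x) = -x := by
  ext ⟨i, a⟩
  fin_cases a <;> simp [Kmat_mulVec_apply_zero, Kmat_mulVec_apply_one]

lemma vecMul_Kmat (x : Idx n → ℝ) : x ᵥ* Kmat n = -(Kmat n *ᵥ x) := by
  rw [← mulVec_transpose, Kmat_transpose, neg_mulVec]

lemma dotProduct_Kmat_mulVec_self (x : Idx n → ℝ) : x ⬝ᵥ (Kmat n *ᵥ x) = 0 :=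
  dotProduct_mulVec_self_of_transpose_eq_neg Kmat_transpose x

lemma linearIndependent_Kmat_mulVec {x : Idx n → ℝ} (hx : x ≠ 0) :
    LinearIndependent ℝ ![x, Kmat n *ᵥ x] := by
  rw [LinearIndependent.pair_iff]
  intro s t hst
  have hK : (Kmat n *ᵥ x) ⬝ᵥ (Kmat n *ᵥ x) = x ⬝ᵥ x := by
    rw [dotProduct_mulVec, vecMul_Kmat, Kmat_mulVec_Kmat_mulVec, neg_neg]
  have hxx : x ⬝ᵥ x ≠ 0 := dotProduct_self_eq_zero.not.mpr hx
  have h1 := congrArg (x ⬝ᵥ ·) hst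
  have h2 := congrArg ((Kmat n *ᵥ x) ⬝ᵥ ·) hst
  simp only [dotProduct_add, dotProduct_smul, smul_eq_mul, dotProduct_zero,
    dotProduct_Kmat_mulVec_self, dotProduct_comm _ x, hK] at h1 h2
  exact ⟨by simpa [hxx] using h1, by simpa [hxx] using h2⟩

lemma Kmat_mul_Mmat (Γ : Fin n → ℝ) : Kmat n * Mmat n Γ = Mmat n Γ * Kmat n := by
  ext a b
  simp only [Mmat, mul_diagonal, diagonal_mul, Kmat, of_apply]
  split_ifs with h
  · rw [h]; ring
  · simp

lemma Kmat_mulVec_Mmat_mulVec (Γ : Fin n → ℝ) (x : Idx n → ℝ) :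
    Kmat n *ᵥ (Mmat n Γ *ᵥ x) = Mmat n Γ *ᵥ (Kmat n *ᵥ x) := by
  rw [mulVec_mulVec, mulVec_mulVec, Kmat_mul_Mmat]

lemma Mmat_transpose (Γ : Fin n → ℝ) : (Mmat n Γ)ᵀ = Mmat n Γ := diagonal_transpose _

lemma isUnit_det_Mmat {Γ : Fin n → ℝ} (hΓ : ∀ i, Γ i ≠ 0) : IsUnit (Mmat n Γ).det := by
  rw [Mmat, det_diagonal]
  exact IsUnit.mk0 _ (Finset.prod_ne_zero_iff.mpr fun a _ => hΓ a.1)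

lemma Mmat_mulVec_dotProduct (Γ : Fin n → ℝ) (x y : Idx n → ℝ) :
    (Mmat n Γ *ᵥ x) ⬝ᵥ y = x ⬝ᵥ (Mmat n Γ *ᵥ y) := by
  rw [dotProduct_comm, dotProduct_mulVec, ← mulVec_transpose, Mmat_transpose, dotProduct_comm]

lemma Mmat_mulVec_vecMul_inv_mul {Γ : Fin n → ℝ} (hΓ : ∀ i, Γ i ≠ 0) (y : Idx n → ℝ)
    (D : Matrix (Idx n) (Idx n) ℝ) : (Mmat n Γ *ᵥ y) ᵥ* ((Mmat n Γ)⁻¹ * D) = y ᵥ* D := by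
  rw [← vecMul_transpose, Mmat_transpose, vecMul_vecMul, ← Matrix.mul_assoc,
    mul_nonsing_inv _ (isUnit_det_Mmat hΓ), Matrix.one_mul]

lemma mem_VperpR_iff {Γ : Fin n → ℝ} {z₀ w : Idx n → ℝ} :
    w ∈ VperpR n Γ z₀ ↔ (Mmat n Γ *ᵥ z₀) ⬝ᵥ w = 0 ∧ (Mmat n Γ *ᵥ (Kmat n *ᵥ z₀)) ⬝ᵥ w = 0 := by
  simp [VperpR, funext_iff, Fin.forall_fin_two]

lemma coe_VperpR (Γ : Fin n → ℝ) (z₀ : Idx n → ℝ) :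
    (VperpR n Γ z₀ : Set (Idx n → ℝ))
      = {w | ∀ v ∈ Vspan n z₀, ∑ a : Idx n, w a * (Mmat n Γ).mulVec v a = 0} := by
  ext w
  change w ∈ VperpR n Γ z₀ ↔ ∀ v ∈ Vspan n z₀, w ⬝ᵥ (Mmat n Γ *ᵥ v) = 0
  simp only [mem_VperpR_iff, Vspan, Submodule.mem_span_pair, dotProduct_comm _ w]
  constructor
  · rintro ⟨h₁, h₂⟩ v ⟨a, b, rfl⟩
    simp only [mulVec_add, mulVec_smul, dotProduct_add, dotProduct_smul, h₁, h₂, smul_zero,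
      add_zero]
  · intro h
    exact ⟨h z₀ ⟨1, 0, by simp⟩, h _ ⟨0, 1, by simp⟩⟩

lemma finrank_VperpR {Γ : Fin n → ℝ} (hΓ : ∀ i, Γ i ≠ 0) {z₀ : Idx n → ℝ} (hz₀ : z₀ ≠ 0) :
    Module.finrank ℝ (VperpR n Γ z₀) = 2 * n - 2 := by
  have hMz₀ : Mmat n Γ *ᵥ z₀ ≠ 0 := fun h => hz₀ <|
    mulVec_injective_of_det_ne_zero (isUnit_det_Mmat hΓ).ne_zero (h.trans (mulVec_zero _).symm)
  have hrows : LinearIndependent ℝ ![Mmat n Γ *ᵥ z₀, Mmat n Γ *ᵥ (Kmat n *ᵥ z₀)] := by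
    simpa only [Kmat_mulVec_Mmat_mulVec] using linearIndependent_Kmat_mulVec hMz₀
  rw [VperpR, finrank_ker_mulVecLin (A := of ![_, _]) hrows]
  simp [Fintype.card_prod, mul_comm]

lemma mulVec_mem_VperpR {Γ : Fin n → ℝ} (hΓ : ∀ i, Γ i ≠ 0) {z₀ : Idx n → ℝ} {ω : ℝ}
    {D : Matrix (Idx n) (Idx n) ℝ} (hD : z₀ ᵥ* D = ω • (Mmat n Γ *ᵥ z₀))
    (hKD : (Kmat n *ᵥ z₀) ᵥ* D = -ω • (Mmat n Γ *ᵥ (Kmat n *ᵥ z₀)))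
    {w : Idx n → ℝ} (hw : w ∈ VperpR n Γ z₀) :
    (Kmat n * ((Mmat n Γ)⁻¹ * D + ω • 1)) *ᵥ w ∈ VperpR n Γ z₀ := by
  have hA : ∀ y, (Mmat n Γ *ᵥ y) ᵥ* ((Mmat n Γ)⁻¹ * D + ω • 1) = y ᵥ* D + ω • (Mmat n Γ *ᵥ y) :=
    fun y => by rw [vecMul_add, vecMul_smul, vecMul_one, Mmat_mulVec_vecMul_inv_mul hΓ]
  rw [mem_VperpR_iff] at hw ⊢
  simp only [dotProduct_mulVec, ← vecMul_vecMul, vecMul_Kmat, Kmat_mulVec_Mmat_mulVec,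
    Kmat_mulVec_Kmat_mulVec, mulVec_neg, neg_vecMul, hA, hD, hKD, neg_dotProduct, add_dotProduct,
    smul_dotProduct, hw.1, hw.2]
  simp

lemma Vspan_inf_VperpR_eq_bot {Γ : Fin n → ℝ} {z₀ : Idx n → ℝ}
    (hs : (Mmat n Γ *ᵥ z₀) ⬝ᵥ z₀ ≠ 0) : Vspan n z₀ ⊓ VperpR n Γ z₀ = ⊥ := by
  have hMK : (Mmat n Γ *ᵥ z₀) ⬝ᵥ (Kmat n *ᵥ z₀) = 0 := by
    rw [Mmat_mulVec_dotProduct, mulVec_mulVec]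
    refine dotProduct_mulVec_self_of_transpose_eq_neg ?_ z₀
    rw [transpose_mul, Kmat_transpose, Mmat_transpose, Matrix.neg_mul, Kmat_mul_Mmat]
  have hKM : (Mmat n Γ *ᵥ (Kmat n *ᵥ z₀)) ⬝ᵥ z₀ = 0 := by
    rw [Mmat_mulVec_dotProduct, dotProduct_comm, hMK]
  have hKK : (Mmat n Γ *ᵥ (Kmat n *ᵥ z₀)) ⬝ᵥ (Kmat n *ᵥ z₀) = (Mmat n Γ *ᵥ z₀) ⬝ᵥ z₀ := by
    rw [dotProduct_mulVec, vecMul_Kmat, ← Kmat_mulVec_Mmat_mulVec, Kmat_mulVec_Kmat_mulVec,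
      neg_neg]
  rw [eq_bot_iff]
  intro v hv
  obtain ⟨hvV, hvperp⟩ := Submodule.mem_inf.mp hv
  obtain ⟨a, b, rfl⟩ := Submodule.mem_span_pair.mp hvV
  rw [mem_VperpR_iff] at hvperp
  simp only [dotProduct_add, dotProduct_smul, smul_eq_mul, hMK, hKM, hKK, mul_zero, add_zero,
    zero_add, mul_eq_zero, hs, or_false] at hvperp
  simp [hvperp.1, hvperp.2]

def pairSqDist (z : Idx n → ℝ) (i j : Fin n) : ℝ :=
  (z (i, 0) - z (j, 0)) ^ 2 + (z (i, 1) - z (j, 1)) ^ 2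

lemma vortexH_eq_sum_log (Γ : Fin n → ℝ) (z : Idx n → ℝ) :
    vortexH n Γ z =
      -∑ i : Fin n, ∑ j ∈ Finset.Ioi i, Γ i * Γ j * (Real.log (pairSqDist z i j) / 2) := by
  rw [vortexH]
  congr 1
  refine Finset.sum_congr rfl fun i _ => Finset.sum_congr rfl fun j _ => ?_
  rw [Real.log_sqrt (by positivity), pairSqDist]

lemma distinct_iff_pairSqDist_ne_zero {z : Idx n → ℝ} :
    Distinct n z ↔ ∀ i j : Fin n, i ≠ j → pairSqDist z i j ≠ 0 := by
  refine forall₂_congr fun i j => imp_congr_right fun _ => not_congr ?_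
  rw [pairSqDist, Prod.ext_iff, ← sub_eq_zero (a := z (i, 0)), ← sub_eq_zero (a := z (i, 1))]
  constructor
  · rintro ⟨h₀, h₁⟩
    rw [h₀, h₁]; ring
  · intro h
    constructor <;> nlinarith [sq_nonneg (z (i, 0) - z (j, 0)), sq_nonneg (z (i, 1) - z (j, 1))]

lemma isOpen_setOf_distinct : IsOpen {z : Idx n → ℝ | Distinct n z} := by
  have : {z : Idx n → ℝ | Distinct n z} =
      ⋂ p : {p : Fin n × Fin n // p.1 ≠ p.2},
        {z | (z (p.1.1, 0), z (p.1.1, 1)) ≠ (z (p.1.2, 0), z (p.1.2, 1))} := by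
    ext z
    simp [Distinct]
  rw [this]
  exact isOpen_iInter_of_finite fun p => isOpen_ne_fun (by fun_prop) (by fun_prop)

lemma contDiffAt_vortexH (Γ : Fin n → ℝ) {z : Idx n → ℝ} (hz : Distinct n z) :
    ContDiffAt ℝ 2 (vortexH n Γ) z := by
  simp only [funext (vortexH_eq_sum_log Γ)]
  refine (ContDiffAt.sum fun i _ => ContDiffAt.sum fun j hj => ?_).neg
  have hsq : ContDiffAt ℝ 2 (fun z : Idx n → ℝ => pairSqDist z i j) z := by
    unfold pairSqDist; fun_prop
  exact contDiffAt_const.mul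
    ((hsq.log (distinct_iff_pairSqDist_ne_zero.mp hz i j (Finset.mem_Ioi.mp hj).ne)).div_const 2)

lemma pairSqDist_smul (t : ℝ) (z : Idx n → ℝ) (i j : Fin n) :
    pairSqDist (t • z) i j = t ^ 2 * pairSqDist z i j := by
  simp only [pairSqDist, Pi.smul_apply, smul_eq_mul]
  ring

lemma distinct_smul {z : Idx n → ℝ} (hz : Distinct n z) {t : ℝ} (ht : t ≠ 0) :
    Distinct n (t • z) := by
  rw [distinct_iff_pairSqDist_ne_zero] at hz ⊢
  intro i j hij
  rw [pairSqDist_smul]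
  exact mul_ne_zero (pow_ne_zero 2 ht) (hz i j hij)

lemma vortexH_smul (Γ : Fin n → ℝ) {z : Idx n → ℝ} (hz : Distinct n z) {t : ℝ} (ht : t ≠ 0) :
    vortexH n Γ (t • z) = vortexH n Γ z - vortexL n Γ * Real.log t := by
  rw [distinct_iff_pairSqDist_ne_zero] at hz
  simp only [vortexH_eq_sum_log, vortexL, Finset.sum_mul, ← Finset.sum_neg_distrib,
    ← Finset.sum_sub_distrib]
  refine Finset.sum_congr rfl fun i _ => Finset.sum_congr rfl fun j hj => ?_
  rw [pairSqDist_smul, Real.log_mul (pow_ne_zero 2 ht) (hz i j (Finset.mem_Ioi.mp hj).ne),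
    Real.log_pow]
  push_cast
  ring

lemma rotConf_eq (θ : ℝ) (z : Idx n → ℝ) :
    rotConf n θ z = Real.cos θ • z + Real.sin θ • (Kmat n *ᵥ z) := by
  ext ⟨i, a⟩
  fin_cases a
  · simp [rotConf, Kmat_mulVec_apply_zero]
  · simp [rotConf, Kmat_mulVec_apply_one]
    ring

lemma pairSqDist_rotConf (θ : ℝ) (z : Idx n → ℝ) (i j : Fin n) :
    pairSqDist (rotConf n θ z) i j = pairSqDist z i j := by
  simp only [pairSqDist, rotConf]
  norm_num
  linear_combination ((z (i, 0) - z (j, 0)) ^ 2 + (z (i, 1) - z (j, 1)) ^ 2) *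
    Real.sin_sq_add_cos_sq θ

lemma vortexH_rotConf (Γ : Fin n → ℝ) (θ : ℝ) (z : Idx n → ℝ) :
    vortexH n Γ (rotConf n θ z) = vortexH n Γ z := by
  simp only [vortexH_eq_sum_log, pairSqDist_rotConf]

lemma distinct_rotConf {z : Idx n → ℝ} (hz : Distinct n z) (θ : ℝ) :
    Distinct n (rotConf n θ z) := by
  simpa only [distinct_iff_pairSqDist_ne_zero, pairSqDist_rotConf] using hz

lemma differentiableAt_fderiv_vortexH (Γ : Fin n → ℝ) {z : Idx n → ℝ} (hz : Distinct n z) :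
    DifferentiableAt ℝ (fderiv ℝ (vortexH n Γ)) z :=
  ((contDiffAt_vortexH Γ hz).fderiv_right (m := 1) (by norm_num)).differentiableAt (by norm_num)

lemma fderiv_vortexH_self (Γ : Fin n → ℝ) {z : Idx n → ℝ} (hz : Distinct n z) :
    fderiv ℝ (vortexH n Γ) z z = -vortexL n Γ := by
  have hray : HasDerivAt (fun t : ℝ => t • z) z 1 := by
    simpa using (hasDerivAt_id (1 : ℝ)).smul_const z
  have hH : HasFDerivAt (vortexH n Γ) (fderiv ℝ (vortexH n Γ) z) ((fun t : ℝ => t • z) 1) := by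
    simpa using ((contDiffAt_vortexH Γ hz).differentiableAt (by norm_num)).hasFDerivAt
  have hlog : HasDerivAt (fun t => vortexH n Γ z - vortexL n Γ * Real.log t) (-vortexL n Γ) 1 := by
    simpa using
      ((Real.hasDerivAt_log one_ne_zero).const_mul (vortexL n Γ)).const_sub (vortexH n Γ z)
  refine (hH.comp_hasDerivAt 1 hray).unique (hlog.congr_of_eventuallyEq ?_)
  filter_upwards [eventually_ne_nhds one_ne_zero] with t ht
  exact vortexH_smul Γ hz ht

lemma fderiv_fderiv_vortexH_self (Γ : Fin n → ℝ) {z : Idx n → ℝ} (hz : Distinct n z)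
    (v : Idx n → ℝ) :
    fderiv ℝ (fderiv ℝ (vortexH n Γ)) z z v = -fderiv ℝ (vortexH n Γ) z v := by
  have hA : HasDerivAt (fun t : ℝ => t • ContinuousLinearMap.id ℝ (Idx n → ℝ))
      (ContinuousLinearMap.id ℝ (Idx n → ℝ)) 1 := by
    simpa using (hasDerivAt_id (1 : ℝ)).smul_const (ContinuousLinearMap.id ℝ (Idx n → ℝ))
  refine fderiv_fderiv_apply_generator hA (one_smul ..) (differentiableAt_fderiv_vortexH Γ hz)
    ?_ v
  filter_upwards [eventually_ne_nhds one_ne_zero] with t ht w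
  refine fderiv_apply_map_of_comp_eventuallyEq (c := -(vortexL n Γ * Real.log t))
    ((contDiffAt_vortexH Γ (distinct_smul hz ht)).differentiableAt (by norm_num)) ?_ w
  filter_upwards [isOpen_setOf_distinct.mem_nhds hz] with y hy
  simp [vortexH_smul Γ hy ht, sub_eq_add_neg]

lemma fderiv_fderiv_vortexH_Kmat (Γ : Fin n → ℝ) {z : Idx n → ℝ} (hz : Distinct n z)
    (v : Idx n → ℝ) :
    fderiv ℝ (fderiv ℝ (vortexH n Γ)) z (Kmat n *ᵥ z) v
      = -fderiv ℝ (vortexH n Γ) z (Kmat n *ᵥ v) := by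
  set K := LinearMap.toContinuousLinearMap (Kmat n).mulVecLin
  set R : ℝ → (Idx n → ℝ) →L[ℝ] (Idx n → ℝ) :=
    fun θ => Real.cos θ • ContinuousLinearMap.id ℝ _ + Real.sin θ • K
  have hR : ∀ θ y, R θ y = rotConf n θ y := fun θ y => by simp [R, K, rotConf_eq]
  have hA : HasDerivAt R K 0 := by
    have := ((Real.hasDerivAt_cos 0).smul_const (ContinuousLinearMap.id ℝ (Idx n → ℝ))).add
      ((Real.hasDerivAt_sin 0).smul_const K)
    simp only [Real.sin_zero, Real.cos_zero, neg_zero, zero_smul, one_smul, zero_add] at this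
    exact this
  refine fderiv_fderiv_apply_generator hA (by simp [R]) (differentiableAt_fderiv_vortexH Γ hz)
    (Eventually.of_forall fun θ w => ?_) v
  refine fderiv_apply_map_of_comp_eventuallyEq (c := 0)
    ((contDiffAt_vortexH Γ (hR θ z ▸ distinct_rotConf hz θ)).differentiableAt (by norm_num)) ?_ w
  exact Eventually.of_forall fun y => by simp [hR, vortexH_rotConf]

lemma fderiv_vortexH_apply (Γ : Fin n → ℝ) (z v : Idx n → ℝ) :
    fderiv ℝ (vortexH n Γ) z v = v ⬝ᵥ gradH n Γ z :=
  (fderiv ℝ (vortexH n Γ) z).apply_eq_dotProduct v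

lemma vecMul_D2H_self (Γ : Fin n → ℝ) {z : Idx n → ℝ} (hz : Distinct n z) :
    z ᵥ* D2H n Γ z = -gradH n Γ z := by
  rw [D2H, vecMul_hessian (differentiableAt_fderiv_vortexH Γ hz)]
  funext b
  rw [fderiv_fderiv_vortexH_self Γ hz]
  rfl

lemma vecMul_D2H_Kmat (Γ : Fin n → ℝ) {z : Idx n → ℝ} (hz : Distinct n z) :
    (Kmat n *ᵥ z) ᵥ* D2H n Γ z = Kmat n *ᵥ gradH n Γ z := by
  rw [D2H, vecMul_hessian (differentiableAt_fderiv_vortexH Γ hz)]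
  funext b
  rw [fderiv_fderiv_vortexH_Kmat Γ hz, fderiv_vortexH_apply, dotProduct_comm, dotProduct_mulVec,
    vecMul_Kmat]
  simp

namespace IsRelEq

variable {Γ : Fin n → ℝ} {z₀ : Idx n → ℝ} {ω : ℝ}

lemma ne_zero (hn : 2 ≤ n) (h : IsRelEq n Γ z₀ ω) : z₀ ≠ 0 := by
  rintro rfl
  exact h.1 ⟨0, by omega⟩ ⟨1, by omega⟩ (by simp [Fin.ext_iff]) rfl

lemma gradH_eq (h : IsRelEq n Γ z₀ ω) : gradH n Γ z₀ = -(ω • (Mmat n Γ *ᵥ z₀)) :=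
  eq_neg_of_add_eq_zero_left h.2.2

lemma vecMul_D2H_self (h : IsRelEq n Γ z₀ ω) : z₀ ᵥ* D2H n Γ z₀ = ω • (Mmat n Γ *ᵥ z₀) := by
  rw [_root_.vecMul_D2H_self Γ h.1, h.gradH_eq, neg_neg]

lemma vecMul_D2H_Kmat (h : IsRelEq n Γ z₀ ω) :
    (Kmat n *ᵥ z₀) ᵥ* D2H n Γ z₀ = -ω • (Mmat n Γ *ᵥ (Kmat n *ᵥ z₀)) := by
  rw [_root_.vecMul_D2H_Kmat Γ h.1, h.gradH_eq, mulVec_neg, mulVec_smul,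
    Kmat_mulVec_Mmat_mulVec, neg_smul]

lemma mul_dotProduct_eq_vortexL (h : IsRelEq n Γ z₀ ω) :
    ω * ((Mmat n Γ *ᵥ z₀) ⬝ᵥ z₀) = vortexL n Γ := by
  have := fderiv_vortexH_self Γ h.1
  rw [fderiv_vortexH_apply, h.gradH_eq, dotProduct_neg, dotProduct_smul, dotProduct_comm] at this
  simpa using this

end IsRelEq

/-- the `M`-orthogonal complement `V^⊥` of `V = span{z₀, Kz₀}` has dimension
`2n - 2`, is invariant under the stability matrix `B`, and if `L ≠ 0` then `V ∩ V^⊥ = {0}`. -/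
theorem Vperp_dim_invariant (n : ℕ) (hn : 2 ≤ n) (Γ : Fin n → ℝ)
    (hΓ : ∀ i, Γ i ≠ 0) (z₀ : Idx n → ℝ) (ω : ℝ) (hre : IsRelEq n Γ z₀ ω) :
    ((VperpR n Γ z₀ : Set (Idx n → ℝ))
      = {w | ∀ v ∈ Vspan n z₀, ∑ a : Idx n, w a * (Mmat n Γ).mulVec v a = 0}) ∧
    Module.finrank ℝ (VperpR n Γ z₀) = 2 * n - 2 ∧
    (∀ w ∈ VperpR n Γ z₀, (Bmat n Γ z₀ ω).mulVec w ∈ VperpR n Γ z₀) ∧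
    (vortexL n Γ ≠ 0 → Vspan n z₀ ⊓ VperpR n Γ z₀ = ⊥) := by
  refine ⟨coe_VperpR Γ z₀, finrank_VperpR hΓ (hre.ne_zero hn),
    fun w hw => mulVec_mem_VperpR hΓ hre.vecMul_D2H_self hre.vecMul_D2H_Kmat hw,
    fun hL => Vspan_inf_VperpR_eq_bot fun hs => hL ?_⟩
  rw [← hre.mul_dotProduct_eq_vortexL, hs, mul_zero]
end
end
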